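/- Order of polynomial extrapolation: suppose a one-step method has an asymptotic error expansion u_h(t+dt) = u(t+dt) + Σ_{m=p}^{p+k−2} e_m h^m + O(h^{p+k−1}) for fixed coefficients e_m, uniformly for small h. If T_{j,1} = u_{h_j}(t+dt) with h_j = dt/n_j and T_{k,k} is obtained by evaluating at h=0 the unique function of the form q(h) = c − Σ_{m=p}^{p+k−2} a_m h^m interpolating the data, then T_{k,k} = u(t+dt) + O(dt^{p+k−1}) as dt → 0 (with n_1 < ... < n_k fixed). -/

import Mathlib

/-!
With `s = {p, …, p+k-2}` and nodes `x_j = 1 / n_j`, the residuals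
`r_j(dt) = u(dt x_j) - L - ∑_{m ∈ s} e_m (dt x_j)^m` are `O(dt^{p+k-1})` by the error expansion,
and by the interpolation conditions they are the values at the nodes of the ansatz
`q(h) = c - ∑_{m ∈ s} a_m h^m` with coefficients `(c(dt) - L, ((a_m(dt) + e_m) dt^m)_m)`.
Since `p ≥ 1`, the ansatz has at most `k` nonzero coefficients, so by Descartes' rule of signs it
vanishing at `k` distinct positive nodes forces it to be zero. Evaluation at the nodes is therefore
an injective linear map on a fixed finite-dimensional space, hence bounded below, and the
coefficient `c(dt) - L` inherits the bound `O(dt^{p+k-1})`.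
-/

open Filter Finset Polynomial Asymptotics Function

namespace Polynomial

theorem signVariations_lt_card_support {R : Type*} [Semiring R] [LinearOrder R] {P : R[X]}
    (hP : P ≠ 0) : signVariations P < #P.support := by
  induction hN : #P.support generalizing P with
  | zero => exact absurd (card_support_eq_zero.mp hN) hP
  | succ N ih =>
    by_cases hE : P.eraseLead = 0
    · rw [← P.eraseLead_add_monomial_natDegree_leadingCoeff, hE, zero_add,
        signVariations_monomial]
      exact N.succ_pos
    · have := ih hE (by rw [card_support_eraseLead, hN, Nat.add_sub_cancel])
      have := P.signVariations_le_eraseLead_succ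
      omega

variable {R : Type*} [CommRing R] [LinearOrder R] [IsStrictOrderedRing R]

theorem eq_zero_of_card_support_le_card_pos_roots {P : R[X]} {S : Finset R}
    (hS : ∀ x ∈ S, 0 < x ∧ P.IsRoot x) (hcard : #P.support ≤ #S) : P = 0 := by
  by_contra hP
  have hsub : S ⊆ (P.roots.filter (0 < ·)).toFinset := fun x hx => by
    simpa [mem_roots hP, (hS x hx).1] using (hS x hx).2
  have := P.roots_countP_pos_le_signVariations
  have := signVariations_lt_card_support hP
  have := (card_le_card hsub).trans (Multiset.toFinset_card_le _)
  rw [Multiset.countP_eq_card_filter] at *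
  omega

end Polynomial

section Ansatz

variable {R : Type*} [CommRing R] (s : Finset ℕ)

noncomputable def ansatz : R × (s → R) →ₗ[R] R[X] where
  toFun ca := C ca.1 - ∑ m : s, C (ca.2 m) * X ^ (m : ℕ)
  map_add' ca ca' := by
    simp only [Prod.fst_add, Prod.snd_add, Pi.add_apply, map_add, add_mul, sum_add_distrib]
    ring
  map_smul' r ca := by
    simp only [Prod.smul_fst, Prod.smul_snd, Pi.smul_apply, smul_eq_mul, map_mul,
      RingHom.id_apply, mul_sub, mul_sum, mul_assoc, smul_eq_C_mul]

theorem eval_ansatz (ca : R × (s → R)) (y : R) :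
    (ansatz s ca).eval y = ca.1 - ∑ m : s, ca.2 m * y ^ (m : ℕ) := by
  simp [ansatz, eval_finsetSum]

theorem coeff_ansatz_zero (h0 : 0 ∉ s) (ca : R × (s → R)) : (ansatz s ca).coeff 0 = ca.1 := by
  simp only [ansatz, LinearMap.coe_mk, AddHom.coe_mk, coeff_sub, coeff_C_zero, finsetSum_coeff,
    coeff_C_mul_X_pow, sub_eq_self]
  exact sum_eq_zero fun m _ => if_neg (ne_of_mem_of_not_mem m.2 h0).symm

theorem coeff_ansatz_of_mem (h0 : 0 ∉ s) (ca : R × (s → R)) (m : s) :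
    (ansatz s ca).coeff m = -ca.2 m := by
  simp [ansatz, finsetSum_coeff, coeff_C, ne_of_mem_of_not_mem m.2 h0]

theorem coeff_ansatz_of_notMem {m : ℕ} (hm0 : m ≠ 0) (hm : m ∉ s) (ca : R × (s → R)) :
    (ansatz s ca).coeff m = 0 := by
  simp only [ansatz, LinearMap.coe_mk, AddHom.coe_mk, coeff_sub, coeff_C, hm0, if_false,
    finsetSum_coeff, coeff_C_mul_X_pow, zero_sub, neg_eq_zero]
  exact sum_eq_zero fun i _ => if_neg (ne_of_mem_of_not_mem i.2 hm).symm

end Ansatz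

section AnsatzEval

variable {R ι : Type*} [CommRing R]

noncomputable def ansatzEval (s : Finset ℕ) (x : ι → R) : R × (s → R) →ₗ[R] ι → R :=
  LinearMap.pi fun j => leval (x j) ∘ₗ ansatz s

theorem ansatzEval_apply (s : Finset ℕ) (x : ι → R) (ca : R × (s → R)) (j : ι) :
    ansatzEval s x ca j = ca.1 - ∑ m : s, ca.2 m * x j ^ (m : ℕ) :=
  eval_ansatz s ca (x j)

theorem ansatzEval_injective [LinearOrder R] [IsStrictOrderedRing R] [Fintype ι] {s : Finset ℕ}
    {x : ι → R} (h0 : 0 ∉ s) (hx : Injective x) (hpos : ∀ j, 0 < x j)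
    (hcard : #s < Fintype.card ι) :
    Injective (ansatzEval s x) := by
  rw [← LinearMap.ker_eq_bot, LinearMap.ker_eq_bot']
  intro ca hca
  have hsupp : (ansatz s ca).support ⊆ insert 0 s := fun m hm => by
    by_contra hm'
    rw [mem_insert, not_or] at hm'
    exact mem_support_iff.mp hm (coeff_ansatz_of_notMem s hm'.1 hm'.2 ca)
  have hP : ansatz s ca = 0 := by
    refine eq_zero_of_card_support_le_card_pos_roots (S := univ.image x) ?_ ?_
    · simp only [mem_image, mem_univ, true_and, forall_exists_index, forall_apply_eq_imp_iff]
      exact fun j => ⟨hpos j, by simpa [ansatzEval] using congrFun hca j⟩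
    · calc #(ansatz s ca).support ≤ #(insert 0 s) := card_le_card hsupp
        _ ≤ #s + 1 := card_insert_le 0 s
        _ ≤ #(univ.image x) := by rw [card_image_of_injective _ hx, card_univ]; exact hcard
  refine Prod.ext ?_ (funext fun m => ?_)
  · rw [← coeff_ansatz_zero s h0, hP, coeff_zero, Prod.fst_zero]
  · simpa [hP] using coeff_ansatz_of_mem s h0 ca m

end AnsatzEval

theorem Asymptotics.IsBigO.of_comp_injective {𝕜 E F G α : Type*} [NontriviallyNormedField 𝕜]
    [CompleteSpace 𝕜] [NormedAddCommGroup E] [NormedSpace 𝕜 E] [FiniteDimensional 𝕜 E]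
    [NormedAddCommGroup F] [NormedSpace 𝕜 F] [Norm G] {T : E →ₗ[𝕜] F} (hT : Injective T)
    {f : α → E} {g : α → G} {l : Filter α} (h : (fun a => T (f a)) =O[l] g) : f =O[l] g := by
  obtain ⟨K, -, hK⟩ := T.exists_antilipschitzWith (LinearMap.ker_eq_bot.mpr hT)
  exact (IsBigO.of_bound K (.of_forall fun a => hK.le_mul_norm (map_zero T) (f a))).trans h

theorem Asymptotics.IsBigO.comp_div_const_nhdsGT {E : Type*} [Norm E] {f : ℝ → E} {N : ℕ}
    (hf : f =O[nhdsWithin 0 (Set.Ioi 0)] fun h => h ^ N) {r : ℝ} (hr : 0 < r) :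
    (fun h => f (h / r)) =O[nhdsWithin 0 (Set.Ioi 0)] fun h => h ^ N := by
  have hdiv : Tendsto (· / r) (nhdsWithin 0 (Set.Ioi 0)) (nhdsWithin 0 (Set.Ioi 0)) := by
    refine tendsto_nhdsWithin_iff.mpr
      ⟨?_, eventually_mem_nhdsWithin.mono fun h hh => div_pos hh hr⟩
    simpa using ((tendsto_id (x := nhds (0 : ℝ))).div_const r).mono_left nhdsWithin_le_nhds
  refine (hf.comp_tendsto hdiv).trans
    (((isBigO_refl _ _).const_mul_left (r ^ N)⁻¹).congr_left fun h => ?_)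
  rw [comp_apply, div_pow, div_eq_inv_mul]

/-- Order of polynomial extrapolation: if the one-step approximation has an
asymptotic error expansion `u_h = L + ∑_{m=p}^{p+k−2} e_m h^m + O(h^{p+k−1})`,
and for each `dt` the function `q(h) = c(dt) − ∑ a_m(dt) h^m` interpolates the
data `T_{j,1} = u_{h_j}` at `h_j = dt / n_j`, then the extrapolated value
`q(0) = c(dt)` satisfies `c(dt) = L + O(dt^{p+k−1})` as `dt → 0⁺`. -/
theorem extrapolation_order_increase (k p : ℕ) (hk : 1 ≤ k) (hp : 1 ≤ p)
    (n : Fin k → ℝ) (hn : StrictMono n) (hnpos : ∀ j, 0 < n j)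
    (L : ℝ) (u : ℝ → ℝ) (e : ℕ → ℝ)
    (hexp : (fun h : ℝ => u h - (L + ∑ m ∈ Finset.Icc p (p + k - 2), e m * h ^ m))
        =O[nhdsWithin 0 (Set.Ioi 0)] fun h : ℝ => h ^ (p + k - 1))
    (c : ℝ → ℝ) (a : ℝ → ℕ → ℝ)
    (hinterp : ∀ dt : ℝ, 0 < dt → ∀ j : Fin k,
      u (dt / n j) = c dt - ∑ m ∈ Finset.Icc p (p + k - 2), a dt m * (dt / n j) ^ m) :
    (fun dt : ℝ => c dt - L) =O[nhdsWithin 0 (Set.Ioi 0)] fun dt : ℝ => dt ^ (p + k - 1) := by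
  set s := Finset.Icc p (p + k - 2)
  have hinj : Injective (ansatzEval s fun j => (n j)⁻¹) :=
    ansatzEval_injective (by simp only [s, mem_Icc]; omega) (inv_injective.comp hn.injective)
      (fun j => inv_pos.mpr (hnpos j)) (by simp only [s, Nat.card_Icc, Fintype.card_fin]; omega)
  have hresidual : (fun dt j => u (dt / n j) - (L + ∑ m ∈ s, e m * (dt / n j) ^ m))
      =O[nhdsWithin 0 (Set.Ioi 0)] fun dt : ℝ => dt ^ (p + k - 1) :=
    isBigO_pi.mpr fun j => hexp.comp_div_const_nhdsGT (hnpos j)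
  have hsystem : (fun dt j => u (dt / n j) - (L + ∑ m ∈ s, e m * (dt / n j) ^ m))
      =ᶠ[nhdsWithin 0 (Set.Ioi 0)] fun dt => ansatzEval s (fun j => (n j)⁻¹)
        (c dt - L, fun m => (a dt m + e m) * dt ^ (m : ℕ)) := by
    filter_upwards [self_mem_nhdsWithin] with dt hdt
    funext j
    rw [ansatzEval_apply, hinterp dt hdt j,
      sum_coe_sort s fun m => (a dt m + e m) * dt ^ m * (n j)⁻¹ ^ m]
    simp only [div_eq_mul_inv, mul_pow, add_mul, sum_add_distrib, mul_assoc]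
    ring
  exact isBigO_fst_prod.trans ((hresidual.congr' hsystem .rfl).of_comp_injective hinj)
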